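/- arXiv:1310.2546 — 5 statements merged into one kernel-verified Lean document; each statement's English description precedes it below -/
import Mathlib

section
/- Let r, s ≥ 3 be odd, coprime integers, let α be irrational, and let T : 𝕋 → 𝕋 be the rotation Tx = x + α on the circle 𝕋 = ℝ/ℤ. For c₁ ∈ [0, 1/r), define A_{c₁} = {(x, y + c₁) ∈ 𝕋² : s·x = r·y}. Then each A_{c₁} is a closed subset of 𝕋² invariant under T^r × T^s, and the union over c₁ ∈ [0, 1/r) of the sets A_{c₁} equals 𝕋². -/
/-- For odd coprime `r, s ≥ 3` and irrational `α`, the sets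
`A_{c₁} = {(x, y + c₁) ∈ 𝕋² : s x = r y} = {(x,y) : s x = r (y - c₁)}` are closed,
invariant under `T^r × T^s : (x,y) ↦ (x + rα, y + sα)`, and their union over
`c₁ ∈ [0, 1/r)` is all of `𝕋²`. -/
theorem stmt0 (r s : ℕ) (hr3 : 3 ≤ r) (hs3 : 3 ≤ s) (hrodd : Odd r) (hsodd : Odd s)
    (hcop : Nat.Coprime r s) (α : ℝ) (hα : Irrational α) :
    (∀ c₁ : ℝ, c₁ ∈ Set.Ico (0 : ℝ) (1 / (r : ℝ)) →
      IsClosed {p : UnitAddCircle × UnitAddCircle |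
          s • p.1 = r • (p.2 - ((c₁ : ℝ) : UnitAddCircle))} ∧
      ∀ p : UnitAddCircle × UnitAddCircle,
        p ∈ {p : UnitAddCircle × UnitAddCircle |
            s • p.1 = r • (p.2 - ((c₁ : ℝ) : UnitAddCircle))} →
        (p.1 + ((((r : ℝ) * α : ℝ)) : UnitAddCircle),
         p.2 + ((((s : ℝ) * α : ℝ)) : UnitAddCircle)) ∈
          {p : UnitAddCircle × UnitAddCircle |
            s • p.1 = r • (p.2 - ((c₁ : ℝ) : UnitAddCircle))}) ∧
    (⋃ c₁ ∈ Set.Ico (0 : ℝ) (1 / (r : ℝ)),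
        {p : UnitAddCircle × UnitAddCircle |
          s • p.1 = r • (p.2 - ((c₁ : ℝ) : UnitAddCircle))}) = Set.univ := by
  constructor
  · intro c₁ hc₁
    constructor
    · exact isClosed_eq (continuous_fst.nsmul s)
        ((continuous_snd.sub continuous_const).nsmul r)
    · intro p hp
      simp only [Set.mem_setOf_eq] at hp ⊢
      have key : s • (((r : ℝ) * α : ℝ) : UnitAddCircle)
          = r • (((s : ℝ) * α : ℝ) : UnitAddCircle) := by
        show (((s : ℕ) • ((r : ℝ) * α) : ℝ) : UnitAddCircle)
          = (((r : ℕ) • ((s : ℝ) * α) : ℝ) : UnitAddCircle)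
        congr 1
        push_cast
        ring
      calc s • (p.1 + (((r : ℝ) * α : ℝ) : UnitAddCircle))
          = s • p.1 + s • (((r : ℝ) * α : ℝ) : UnitAddCircle) := smul_add _ _ _
        _ = r • (p.2 - ((c₁ : ℝ) : UnitAddCircle)) + r • (((s : ℝ) * α : ℝ) : UnitAddCircle) := by
            rw [hp, key]
        _ = r • (p.2 + (((s : ℝ) * α : ℝ) : UnitAddCircle) - ((c₁ : ℝ) : UnitAddCircle)) := by
            rw [← smul_add]; congr 1; abel
  · ext p
    simp only [Set.mem_iUnion, Set.mem_setOf_eq, Set.mem_univ, iff_true]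
    obtain ⟨x, hx⟩ := QuotientAddGroup.mk_surjective p.1
    obtain ⟨y, hy⟩ := QuotientAddGroup.mk_surjective p.2
    have hr0 : (0:ℝ) < r := by positivity
    set c : ℝ := Int.fract ((r:ℝ)*y - (s:ℝ)*x) / r with hc
    refine ⟨c, ⟨div_nonneg (Int.fract_nonneg _) hr0.le, ?_⟩, ?_⟩
    · rw [hc, div_lt_div_iff₀ hr0 hr0]
      have := Int.fract_lt_one ((r:ℝ)*y - (s:ℝ)*x)
      nlinarith
    · rw [← hx, ← hy]
      show (((s:ℕ) • x : ℝ) : UnitAddCircle) = (((r:ℕ) • (y - c) : ℝ) : UnitAddCircle)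
      rw [← sub_eq_zero, show ((((s:ℕ) • x : ℝ)) : UnitAddCircle) - (((r:ℕ) • (y - c) : ℝ) : UnitAddCircle)
          = ((((s:ℕ) • x - (r:ℕ) • (y - c) : ℝ)) : UnitAddCircle) from rfl,
        AddCircle.coe_eq_zero_iff]
      refine ⟨-⌊(r:ℝ)*y - (s:ℝ)*x⌋, ?_⟩
      have hfr : Int.fract ((r:ℝ)*y - (s:ℝ)*x) = (r:ℝ)*y - (s:ℝ)*x - ⌊(r:ℝ)*y - (s:ℝ)*x⌋ :=
        rfl
      have hrc : (r:ℝ) * c = Int.fract ((r:ℝ)*y - (s:ℝ)*x) := by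
        rw [hc]; field_simp
      have hexp : (r:ℝ) * (y - c) = (r:ℝ)*y - (r:ℝ)*c := by ring
      simp only [zsmul_eq_mul, nsmul_eq_mul, Int.cast_neg, mul_one]
      push_cast
      linarith [hrc, hfr, hexp]
end

section
/- Let {qₙ}ₙ ⊆ ℕ be an infinite set of positive integers and R : ℕ → (0, ∞) a positive function. Then the set 𝒜 of α ∈ [0,1) such that for infinitely many n, α has a continued-fraction convergent p/qₙ (with denominator exactly qₙ) satisfying |α − p/qₙ| < R(qₙ), is residual (comeager) in [0,1). -/
/-!
Writing `Vₙ` for the (open) union of the balls of radius `min (R qₙ) (1/(2qₙ²))` around the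
reduced fractions `p/qₙ`, the set in question is `⋂_N ⋃_{n ≥ N} Vₙ`, so it is residual as soon
as the reduced fractions with denominator `q` become `ε`-dense in `[0,1)` for all large `q`,
i.e. as soon as every interval of length `δq` contains an integer coprime to `q` for `q ≫ 1`.
Legendre's sieve shows that such an interval contains at least `δq ∏_{p ∣ q} (1 - 1/p) - 2^ω(q)`
of them, and `4^ω(q) ≤ 512 q ∏_{p ∣ q} (1 - 1/p)²`, so this count is positive once
`q > 512/δ²`.
-/

open Filter Finset

theorem setOf_frequently_mem_residual {X : Type*} [TopologicalSpace X] {P : ℕ → X → Prop}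
    (hP : ∀ n, IsOpen {x | P n x}) (hdense : ∀ N, Dense {x | ∃ n ≥ N, P n x}) :
    {x | ∃ᶠ n in atTop, P n x} ∈ residual X := by
  have hlimsup : {x | ∃ᶠ n in atTop, P n x} = ⋂ N, {x | ∃ n ≥ N, P n x} := by
    ext x
    simp [frequently_atTop]
  have hopen : ∀ N, IsOpen {x | ∃ n ≥ N, P n x} := fun N => by
    simp only [Set.ofPred_exists, Set.ofPred_and]
    exact isOpen_iUnion fun n => isOpen_const.inter (hP n)
  rw [hlimsup, countable_iInter_mem]
  exact fun N => residual_of_dense_open (hopen N) (hdense N)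

noncomputable def siftedIoc (S : Finset ℕ) (a b : ℝ) : Finset ℤ :=
  {m ∈ Ioc ⌊a⌋ ⌊b⌋ | ∀ p ∈ S, ¬ (p : ℤ) ∣ m}

theorem mem_siftedIoc {S : Finset ℕ} {a b : ℝ} {m : ℤ} :
    m ∈ siftedIoc S a b ↔ (a < m ∧ (m : ℝ) ≤ b) ∧ ∀ p ∈ S, ¬ (p : ℤ) ∣ m := by
  simp [siftedIoc, Int.floor_lt, Int.le_floor]

theorem abs_card_Ioc_floor_sub_le {a b : ℝ} (hab : a ≤ b) :
    |(#(Ioc ⌊a⌋ ⌊b⌋) : ℝ) - (b - a)| ≤ 1 := by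
  have hlen : ((⌊b⌋ - ⌊a⌋).toNat : ℝ) = ((⌊b⌋ - ⌊a⌋ : ℤ) : ℝ) := by
    exact_mod_cast Int.toNat_of_nonneg (sub_nonneg.2 (Int.floor_mono hab))
  rw [Int.card_Ioc, hlen]
  push_cast
  rw [abs_le]
  constructor <;>
    linarith [Int.floor_le a, Int.floor_le b, Int.lt_floor_add_one a, Int.lt_floor_add_one b]

theorem card_siftedIoc_insert {S : Finset ℕ} {p : ℕ} (hp : p.Prime) (hpS : p ∉ S)
    (hS : ∀ r ∈ S, r.Prime) (a b : ℝ) :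
    #(siftedIoc (insert p S) a b) + #(siftedIoc S (a / p) (b / p)) = #(siftedIoc S a b) := by
  have hp0 : (0 : ℝ) < p := by exact_mod_cast hp.pos
  have hnot : siftedIoc (insert p S) a b = {m ∈ siftedIoc S a b | ¬ (p : ℤ) ∣ m} := by
    ext m
    simp only [mem_filter, mem_siftedIoc, forall_mem_insert]
    tauto
  have hmul : ∀ r ∈ S, ∀ k : ℤ, (r : ℤ) ∣ p * k ↔ (r : ℤ) ∣ k := fun r hr k =>
    ⟨(Nat.isCoprime_iff_coprime.2 <| (Nat.coprime_primes (hS r hr) hp).2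
      (ne_of_mem_of_not_mem hr hpS)).dvd_of_dvd_mul_left, (Dvd.dvd.mul_left · _)⟩
  have hdvd : #{m ∈ siftedIoc S a b | (p : ℤ) ∣ m} = #(siftedIoc S (a / p) (b / p)) := by
    symm
    refine card_bij (fun k _ => p * k) (fun k hk => ?_) (fun k _ l _ h => ?_) (fun m hm => ?_)
    · simp only [mem_filter, mem_siftedIoc, dvd_mul_right, and_true] at hk ⊢
      push_cast
      refine ⟨⟨?_, ?_⟩, fun r hr => (hmul r hr k).not.2 (hk.2 r hr)⟩
      · rw [← div_lt_iff₀' hp0]; exact hk.1.1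
      · rw [← le_div_iff₀' hp0]; exact hk.1.2
    · exact mul_left_cancel₀ (by exact_mod_cast hp.ne_zero) h
    · simp only [mem_filter, mem_siftedIoc] at hm
      obtain ⟨⟨⟨ham, hmb⟩, hmS⟩, k, rfl⟩ := hm
      push_cast at ham hmb
      refine ⟨k, ?_, rfl⟩
      rw [mem_siftedIoc, div_lt_iff₀' hp0, le_div_iff₀' hp0]
      exact ⟨⟨ham, hmb⟩, fun r hr => (hmul r hr k).not.1 (hmS r hr)⟩
  rw [hnot, ← hdvd, add_comm]
  exact card_filter_add_card_filter_not _

theorem abs_card_siftedIoc_sub_le (S : Finset ℕ) (hS : ∀ p ∈ S, p.Prime) {a b : ℝ}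
    (hab : a ≤ b) :
    |(#(siftedIoc S a b) : ℝ) - (b - a) * ∏ p ∈ S, (1 - (p : ℝ)⁻¹)| ≤ 2 ^ #S := by
  induction S using Finset.induction_on generalizing a b with
  | empty => simpa [siftedIoc] using abs_card_Ioc_floor_sub_le hab
  | insert p S hpS ih =>
    have hp := hS p (mem_insert_self p S)
    have hS' : ∀ r ∈ S, r.Prime := fun r hr => hS r (mem_insert_of_mem hr)
    have hp0 : (0 : ℝ) < p := by exact_mod_cast hp.pos
    have hcard : (#(siftedIoc (insert p S) a b) : ℝ) =
        #(siftedIoc S a b) - #(siftedIoc S (a / p) (b / p)) := by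
      rw [eq_sub_iff_add_eq]
      exact_mod_cast card_siftedIoc_insert hp hpS hS' a b
    have hlen : (b - a) * ((1 - (p : ℝ)⁻¹) * ∏ r ∈ S, (1 - (r : ℝ)⁻¹)) =
        (b - a) * ∏ r ∈ S, (1 - (r : ℝ)⁻¹) - (b / p - a / p) * ∏ r ∈ S, (1 - (r : ℝ)⁻¹) := by
      field_simp
    rw [prod_insert hpS, card_insert_of_notMem hpS, pow_succ, hcard, hlen]
    calc _ = |((#(siftedIoc S a b) : ℝ) - (b - a) * ∏ r ∈ S, (1 - (r : ℝ)⁻¹)) -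
          ((#(siftedIoc S (a / p) (b / p)) : ℝ) -
            (b / p - a / p) * ∏ r ∈ S, (1 - (r : ℝ)⁻¹))| := by
          ring_nf
      _ ≤ 2 ^ #S + 2 ^ #S :=
          (abs_sub _ _).trans (add_le_add (ih hS' hab)
            (ih hS' (div_le_div_of_nonneg_right hab hp0.le)))
      _ = 2 ^ #S * 2 := by ring

theorem four_pow_card_le (S : Finset ℕ) (hS : ∀ p ∈ S, p.Prime) :
    (4 : ℝ) ^ #S ≤ 512 * (∏ p ∈ S, (p : ℝ)) * (∏ p ∈ S, (1 - (p : ℝ)⁻¹)) ^ 2 := by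
  -- `4 ≤ (p - 1)² / p` fails only for `p ∈ {2, 3, 5}`, where `4 ≤ 8 (p - 1)² / p`; `512 = 8³`
  have hprime : ∀ p ∈ S,
      (4 : ℝ) ≤ (if p < 7 then 8 else 1) * ((p : ℝ) * (1 - (p : ℝ)⁻¹) ^ 2) := by
    intro p hpS
    have h2 : (2 : ℝ) ≤ p := by exact_mod_cast (hS p hpS).two_le
    have hexp : (p : ℝ) * (1 - (p : ℝ)⁻¹) ^ 2 = (p - 1) ^ 2 / p := by field_simp
    rw [hexp]
    split_ifs with h7
    · rw [mul_div_assoc', le_div_iff₀ (by linarith)]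
      nlinarith
    · have : (7 : ℝ) ≤ p := by exact_mod_cast not_lt.1 h7
      rw [one_mul, le_div_iff₀ (by linarith)]
      nlinarith
  have hsmall : #{p ∈ S | p < 7} ≤ 3 :=
    (card_le_card fun p hp => by
      simp only [mem_filter, mem_range] at hp ⊢
      exact ⟨hp.2, hS p hp.1⟩).trans_eq (by decide : #{p ∈ range 7 | p.Prime} = 3)
  have hweight : ∏ p ∈ S, (if p < 7 then (8 : ℝ) else 1) ≤ 512 := by
    rw [prod_ite, prod_const, prod_const_one, mul_one]
    calc (8 : ℝ) ^ #{p ∈ S | p < 7} ≤ 8 ^ 3 := pow_le_pow_right₀ (by norm_num) hsmall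
      _ = 512 := by norm_num
  calc (4 : ℝ) ^ #S = ∏ _p ∈ S, (4 : ℝ) := (prod_const _).symm
    _ ≤ ∏ p ∈ S, (if p < 7 then 8 else 1) * ((p : ℝ) * (1 - (p : ℝ)⁻¹) ^ 2) :=
        prod_le_prod (fun _ _ => by norm_num) hprime
    _ ≤ 512 * ∏ p ∈ S, ((p : ℝ) * (1 - (p : ℝ)⁻¹) ^ 2) := by
        rw [prod_mul_distrib]
        exact mul_le_mul_of_nonneg_right hweight (prod_nonneg fun _ _ => by positivity)
    _ = _ := by rw [prod_mul_distrib, prod_pow, mul_assoc]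

theorem Int.gcd_eq_one_of_forall_primeFactors {m : ℤ} {q : ℕ} (hq : q ≠ 0)
    (h : ∀ p ∈ q.primeFactors, ¬ (p : ℤ) ∣ m) : Int.gcd m q = 1 :=
  Nat.coprime_of_dvd fun p hp hpm hpq =>
    h p (Nat.mem_primeFactors.2 ⟨hp, hpq, hq⟩) (Int.natCast_dvd.2 hpm)

theorem eventually_exists_coprime_div_mem_Ioc (a : ℝ) {δ : ℝ} (hδ : 0 < δ) :
    ∀ᶠ q : ℕ in atTop, ∃ m : ℤ, Int.gcd m q = 1 ∧ (m / q : ℝ) ∈ Set.Ioc a (a + δ) := by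
  obtain ⟨Q, hQ⟩ := exists_nat_gt (512 / δ ^ 2)
  filter_upwards [eventually_gt_atTop Q] with q hqQ
  have hqQ' : 512 / δ ^ 2 < (q : ℝ) := hQ.trans (by exact_mod_cast hqQ)
  have hq : (0 : ℝ) < q := (by positivity : (0 : ℝ) < 512 / δ ^ 2).trans hqQ'
  set S := q.primeFactors
  set P := ∏ p ∈ S, (1 - (p : ℝ)⁻¹)
  have hS : ∀ p ∈ S, p.Prime := fun p => Nat.prime_of_mem_primeFactors
  have hP : 0 < P := prod_pos fun p hp => by
    have : (2 : ℝ) ≤ p := by exact_mod_cast (hS p hp).two_le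
    rw [sub_pos, inv_lt_one₀ (by linarith)]
    linarith
  have hrad : ∏ p ∈ S, (p : ℝ) ≤ q := by
    rw [← Nat.cast_prod]
    exact_mod_cast Nat.le_of_dvd (by exact_mod_cast hq) q.prod_primeFactors_dvd
  have hsieve := abs_card_siftedIoc_sub_le S hS
    (mul_le_mul_of_nonneg_right (by linarith : a ≤ a + δ) hq.le)
  obtain ⟨m, hm⟩ : (siftedIoc S (a * q) ((a + δ) * q)).Nonempty := by
    rw [← card_pos, Nat.pos_iff_ne_zero]
    intro h0
    rw [h0, abs_le] at hsieve
    have hcount : δ * q * P ≤ 2 ^ #S := by linarith [hsieve.1]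
    have hsq : (δ * q * P) ^ 2 ≤ 512 * q * P ^ 2 := calc
      _ ≤ ((2 : ℝ) ^ #S) ^ 2 := pow_le_pow_left₀ (by positivity) hcount 2
      _ = 4 ^ #S := by rw [← pow_mul, mul_comm, pow_mul]; norm_num
      _ ≤ 512 * (∏ p ∈ S, (p : ℝ)) * P ^ 2 := four_pow_card_le S hS
      _ ≤ 512 * q * P ^ 2 := by gcongr
    rw [div_lt_iff₀ (by positivity)] at hqQ'
    nlinarith [mul_pos hq (pow_pos hP 2)]
  rw [mem_siftedIoc] at hm
  refine ⟨m, Int.gcd_eq_one_of_forall_primeFactors (by exact_mod_cast hq.ne') hm.2, ?_, ?_⟩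
  · rw [lt_div_iff₀ hq]; exact hm.1.1
  · rw [div_le_iff₀ hq]; exact hm.1.2

theorem stmt6_general (q : ℕ → ℕ) (hqinj : Function.Injective q)
    (R : ℕ → ℝ) (hR : ∀ n, 0 < R n) :
    {α : Set.Ico (0 : ℝ) 1 | ∃ᶠ n in atTop, ∃ p : ℤ,
        Int.gcd p (q n) = 1 ∧
        |(α : ℝ) - (p : ℝ) / (q n : ℝ)| < min (R (q n)) (1 / (2 * (q n : ℝ) ^ 2))}
      ∈ residual (Set.Ico (0 : ℝ) 1) := by
  refine setOf_frequently_mem_residual (fun n => ?_) fun N => Metric.dense_iff.2 fun x ε hε => ?_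
  · simp only [Set.ofPred_exists, Set.ofPred_and]
    exact isOpen_iUnion fun p => isOpen_const.inter
      (isOpen_lt (by fun_prop) continuous_const)
  obtain ⟨hx0, hx1⟩ := x.2
  obtain ⟨δ, hδ, hδmin⟩ := exists_between (lt_min hε (sub_pos.2 hx1))
  obtain ⟨hδε, hδx⟩ := lt_min_iff.1 hδmin
  have hq : Tendsto q atTop atTop := Nat.cofinite_eq_atTop ▸ hqinj.tendsto_cofinite
  obtain ⟨n, ⟨m, hm, hxm, hmx⟩, hq0, hNn⟩ :=
    ((hq.eventually (eventually_exists_coprime_div_mem_Ioc x hδ)).and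
      ((hq.eventually (eventually_gt_atTop 0)).and (eventually_ge_atTop N))).exists
  refine ⟨⟨m / q n, by linarith, by linarith⟩, ?_, n, hNn, m, hm, ?_⟩
  · rw [Metric.mem_ball, Subtype.dist_eq, Real.dist_eq, abs_of_pos (by linarith)]
    linarith
  · have : (0 : ℝ) < q n := by exact_mod_cast hq0
    rw [sub_self, abs_zero]
    exact lt_min (hR _) (by positivity)

/-- Given an infinite set `{qₙ} ⊆ ℕ` and a positive function `R`, the set of
`α ∈ [0,1)` admitting, for infinitely many `n`, a (reduced) continued-fraction
convergent `p/qₙ` with `|α - p/qₙ| < R(qₙ)` is residual in `[0,1)`.  (A reduced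
fraction `p/q` with `|α - p/q| < 1/(2q²)` is automatically a convergent of `α`.) -/
theorem stmt6 (q : ℕ → ℕ) (hqinj : Function.Injective q) (hqpos : ∀ n, 0 < q n)
    (R : ℕ → ℝ) (hR : ∀ n, 0 < R n) :
    {α : Set.Ico (0 : ℝ) 1 | ∃ᶠ n in atTop, ∃ p : ℤ,
        Int.gcd p (q n) = 1 ∧
        |(α : ℝ) - (p : ℝ) / (q n : ℝ)| < min (R (q n)) (1 / (2 * (q n : ℝ) ^ 2))}
      ∈ residual (Set.Ico (0 : ℝ) 1) :=
  stmt6_general q hqinj R hR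
end

section
/- Let T : X → X be a minimal homeomorphism of a compact metric space, G a compact abelian metric group, and φ : X → G continuous. Define Γ_top = {χ ∈ Ĝ : χ∘φ is a topological T-coboundary, i.e., χ∘φ = h∘T / h for some continuous h : X → S¹}. Let g₀ ∈ G be such that every minimal component M of the skew product T_φ(x,g) = (Tx, φ(x)g) satisfies R_{g₀}(M) = M, where R_{g₀}(x,h) = (x, h·g₀⁻¹). Then χ(g₀) = 1 for all χ ∈ Γ_top. -/
/-!
Let `h` be a continuous transfer function for `χ ∘ φ`, i.e. `χ (φ x) = h (T x) / h x`. Then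
`w (x, g) = χ g / h x` is a continuous function invariant under the skew product
`T_φ (x, g) = (T x, φ x * g)`, so it is constant on every minimal component `M` (its level
set through a point of `M` is again nonempty, closed and invariant). A minimal component
exists by Zorn's lemma and compactness, and if `M` is stable under `(x, g) ↦ (x, g * g₀⁻¹)`
it contains two points `(x, g)` and `(x, g * g₀)`, at which `w` differs by the factor `χ g₀`.
-/

open Set

section MinimalComponent

variable {α : Type*} [TopologicalSpace α] {f : α → α}

def IsNonemptyClosedInvariant (f : α → α) (s : Set α) : Prop :=
  s.Nonempty ∧ IsClosed s ∧ MapsTo f s s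

theorem isNonemptyClosedInvariant_univ [Nonempty α] : IsNonemptyClosedInvariant f univ :=
  ⟨univ_nonempty, isClosed_univ, mapsTo_univ f univ⟩

theorem isNonemptyClosedInvariant_sInter_of_isChain [CompactSpace α] {c : Set (Set α)}
    (hc : ∀ s ∈ c, IsNonemptyClosedInvariant f s) (hchain : IsChain (· ⊆ ·) c)
    (hne : c.Nonempty) : IsNonemptyClosedInvariant f (⋂₀ c) := by
  have : Nonempty c := hne.to_subtype
  refine ⟨?_, isClosed_sInter fun s hs => (hc s hs).2.1, mapsTo_sInter.mpr fun s hs => ?_⟩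
  · exact IsCompact.nonempty_sInter_of_directed_nonempty_isCompact_isClosed
      (hchain.symm.directedOn (r := fun s t : Set α => s ⊇ t)) (fun s hs => (hc s hs).1) (fun s hs => (hc s hs).2.1.isCompact)
      (fun s hs => (hc s hs).2.1)
  · exact (hc s hs).2.2.mono_left (sInter_subset_of_mem hs)

theorem exists_minimal_isNonemptyClosedInvariant [CompactSpace α] [Nonempty α] (f : α → α) :
    ∃ M, Minimal (IsNonemptyClosedInvariant f) M := by
  obtain ⟨M, -, hM⟩ := zorn_superset_nonempty {s | IsNonemptyClosedInvariant f s}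
    (fun c hc hchain hne => ⟨⋂₀ c, isNonemptyClosedInvariant_sInter_of_isChain hc hchain hne,
      fun _ => sInter_subset_of_mem⟩) univ isNonemptyClosedInvariant_univ
  exact ⟨M, hM⟩

theorem Minimal.apply_eq_of_continuous_of_invariant {M : Set α}
    (hM : Minimal (IsNonemptyClosedInvariant f) M) {β : Type*} [TopologicalSpace β] [T1Space β]
    {w : α → β} (hw : Continuous w) (hwf : ∀ p, w (f p) = w p) {p q : α} (hp : p ∈ M)
    (hq : q ∈ M) : w q = w p := by
  have hlevel : IsNonemptyClosedInvariant f (M ∩ w ⁻¹' {w p}) :=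
    ⟨⟨p, hp, rfl⟩, hM.prop.2.1.inter (isClosed_singleton.preimage hw),
      fun r ⟨hrM, hrw⟩ => ⟨hM.prop.2.2 hrM, (hwf r).trans hrw⟩⟩
  rw [← hM.eq_of_subset hlevel inter_subset_left] at hq
  exact hq.2

end MinimalComponent

section SkewProduct

variable {X G K : Type*}

def skewProduct [Mul G] (T : X → X) (φ : X → G) (p : X × G) : X × G :=
  (T p.1, φ p.1 * p.2)

theorem div_transfer_skewProduct [Monoid G] [CommGroupWithZero K] {T : X → X} {φ : X → G}
    {χ : G →* K} {h : X → K} (hh : ∀ x, h x ≠ 0) (hcob : ∀ x, χ (φ x) = h (T x) / h x)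
    (p : X × G) : χ (skewProduct T φ p).2 / h (skewProduct T φ p).1 = χ p.2 / h p.1 := by
  simp only [skewProduct, map_mul, hcob]
  field_simp [hh (T p.1)]

variable [TopologicalSpace X] [TopologicalSpace G] [Field K] [TopologicalSpace K] [T1Space K]
  [ContinuousInv₀ K] [ContinuousMul K]

theorem map_eq_one_of_mem_minimal_skewProduct [Group G] {T : X → X} {φ : X → G}
    {M : Set (X × G)} (hM : Minimal (IsNonemptyClosedInvariant (skewProduct T φ)) M)
    {χ : G →* K} (hχ : Continuous χ) {h : X → K} (hh : Continuous h) (hh0 : ∀ x, h x ≠ 0)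
    (hcob : ∀ x, χ (φ x) = h (T x) / h x) {g₀ : G} {x : X} {g : G} (hp : (x, g) ∈ M)
    (hq : (x, g * g₀) ∈ M) : χ g₀ = 1 := by
  have hw : Continuous fun p : X × G => χ p.2 / h p.1 :=
    (hχ.comp continuous_snd).div (hh.comp continuous_fst) fun p => hh0 p.1
  have hconst := hM.apply_eq_of_continuous_of_invariant hw (div_transfer_skewProduct hh0 hcob)
    hp hq
  have hχg : χ g ≠ 0 := ((Group.isUnit g).map χ).ne_zero
  rwa [div_left_inj' (hh0 x), map_mul, mul_eq_left₀ hχg] at hconst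

end SkewProduct

theorem stmt8_general {X : Type*} [MetricSpace X] [CompactSpace X] [Nonempty X]
    (T : X ≃ₜ X)
    {G : Type*} [MetricSpace G] [CommGroup G] [CompactSpace G]
    (φ : X → G) (g₀ : G)
    (hfix : ∀ M : Set (X × G),
      (M.Nonempty ∧ IsClosed M ∧
        (∀ p ∈ M, ((T p.1, φ p.1 * p.2) : X × G) ∈ M) ∧
        (∀ M' ⊆ M, M'.Nonempty → IsClosed M' →
          (∀ p ∈ M', ((T p.1, φ p.1 * p.2) : X × G) ∈ M') → M' = M)) →
      (fun p : X × G => (p.1, p.2 * g₀⁻¹)) '' M = M)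
    (χ : G →* ℂ) (hχcont : Continuous χ)
    (h : X → ℂ) (hhcont : Continuous h) (hhnorm : ∀ x, ‖h x‖ = 1)
    (hcob : ∀ x : X, χ (φ x) = h (T x) / h x) :
    χ g₀ = 1 := by
  obtain ⟨M, hM⟩ := exists_minimal_isNonemptyClosedInvariant (skewProduct T φ)
  obtain ⟨⟨x, g⟩, hp⟩ := hM.prop.1
  have hrot := hfix M ⟨hM.prop.1, hM.prop.2.1, hM.prop.2.2,
    fun M' hM' hne hcl hinv => hM.eq_of_subset ⟨hne, hcl, hinv⟩ hM'⟩
  have hq : (x, g * g₀⁻¹) ∈ M := hrot ▸ mem_image_of_mem _ hp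
  have hh0 (y : X) : h y ≠ 0 := norm_ne_zero_iff.mp (by rw [hhnorm]; exact one_ne_zero)
  refine map_eq_one_of_mem_minimal_skewProduct hM hχcont hhcont hh0 hcob hq ?_
  rwa [inv_mul_cancel_right]

/-- If `g₀` stabilizes every minimal component of the skew product
`T_φ(x,g) = (Tx, φ(x)·g)` over a minimal homeomorphism `T` of a compact metric space,
then `χ(g₀) = 1` for every character `χ` such that `χ∘φ` is a topological coboundary. -/
theorem stmt8 {X : Type*} [MetricSpace X] [CompactSpace X] [Nonempty X]
    (T : X ≃ₜ X) (hTmin : ∀ x : X, Dense (Set.range fun n : ℕ => T^[n] x))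
    {G : Type*} [MetricSpace G] [CommGroup G] [IsTopologicalGroup G] [CompactSpace G]
    (φ : X → G) (hφ : Continuous φ) (g₀ : G)
    (hfix : ∀ M : Set (X × G),
      (M.Nonempty ∧ IsClosed M ∧
        (∀ p ∈ M, ((T p.1, φ p.1 * p.2) : X × G) ∈ M) ∧
        (∀ M' ⊆ M, M'.Nonempty → IsClosed M' →
          (∀ p ∈ M', ((T p.1, φ p.1 * p.2) : X × G) ∈ M') → M' = M)) →
      (fun p : X × G => (p.1, p.2 * g₀⁻¹)) '' M = M)
    (χ : G →* ℂ) (hχcont : Continuous χ) (hχnorm : ∀ g : G, ‖χ g‖ = 1)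
    (h : X → ℂ) (hhcont : Continuous h) (hhnorm : ∀ x, ‖h x‖ = 1)
    (hcob : ∀ x : X, χ (φ x) = h (T x) / h x) :
    χ g₀ = 1 :=
  stmt8_general T φ g₀ hfix χ hχcont h hhcont hhnorm hcob
end

section
/- Let T be a homeomorphism of a compact metric space X, let g : X → ℂ be continuous and bounded, and let k ≥ 1. Suppose that for all x, y ∈ X and all sufficiently large distinct primes r, s, (1/N)∑_{n≤N} g((T^k)^{rn} x)·conj(g((T^k)^{sn} y)) → 0 as N → ∞ (with the threshold on r, s independent of x, y). Then for every x ∈ X and all sufficiently large distinct primes r, s, (1/N)∑_{n≤N} g(T^{rn} x)·conj(g(T^{sn} x)) → 0 as N → ∞. -/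
/-!
Split `n = k * m + j` with `0 ≤ j < k`. Along the residue class `j`, the orbit points are
`T^{r(km+j)} x = (T^k)^{rm} (T^{rj} x)` and `T^{s(km+j)} x = (T^k)^{sm} (T^{sj} x)`, so the
hypothesis, applied to the two different points `T^{rj} x` and `T^{sj} x` (this is where
uniformity in the initial points is needed), makes the averages over each residue class vanish. The
full Cesàro average is, up to an `O(k / N)` boundary term, the sum of these `k` averages.
-/

open Filter

theorem Finset.sum_range_mul_eq_sum_residues {M : Type*} [AddCommMonoid M] (f : ℕ → M) (k m : ℕ) :
    ∑ n ∈ range (k * m), f n = ∑ j ∈ range k, ∑ i ∈ range m, f (k * i + j) := by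
  induction m with
  | zero => simp
  | succ m ih =>
    rw [Nat.mul_succ, sum_range_add, ih]
    simp only [sum_range_succ, sum_add_distrib]

section Cesaro

variable {𝕜 : Type*} [RCLike 𝕜] {f : ℕ → 𝕜} {C : ℝ} {k : ℕ}

theorem norm_cesaro_le_norm_cesaro_mul_add (hf : ∀ n, ‖f n‖ ≤ C) (hk : 0 < k) (N : ℕ) :
    ‖(N : 𝕜)⁻¹ * ∑ n ∈ Finset.range N, f n‖ ≤
      ‖((N / k : ℕ) : 𝕜)⁻¹ * ∑ n ∈ Finset.range (k * (N / k)), f n‖ + C * k / N := by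
  have hsplit : ∑ n ∈ Finset.range N, f n = ∑ n ∈ Finset.range (k * (N / k)), f n +
      ∑ i ∈ Finset.range (N % k), f (k * (N / k) + i) := by
    rw [← Finset.sum_range_add, Nat.div_add_mod]
  have hhead : ‖(N : 𝕜)⁻¹ * ∑ n ∈ Finset.range (k * (N / k)), f n‖ ≤
      ‖((N / k : ℕ) : 𝕜)⁻¹ * ∑ n ∈ Finset.range (k * (N / k)), f n‖ := by
    rcases (N / k).eq_zero_or_pos with h0 | hpos
    · simp [h0]
    · simp only [norm_mul, norm_inv, RCLike.norm_natCast]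
      gcongr
      exact Nat.div_le_self N k
  have htail : ‖∑ i ∈ Finset.range (N % k), f (k * (N / k) + i)‖ ≤ C * k :=
    calc _ ≤ ∑ i ∈ Finset.range (N % k), C := norm_sum_le_of_le _ fun i _ => hf _
      _ = (N % k : ℕ) * C := by simp
      _ ≤ C * k := by
        rw [mul_comm]
        exact mul_le_mul_of_nonneg_left (by exact_mod_cast (Nat.mod_lt N hk).le)
          ((norm_nonneg _).trans (hf 0))
  rw [hsplit, mul_add, div_eq_inv_mul]
  refine (norm_add_le _ _).trans (add_le_add hhead ?_)
  rw [norm_mul, norm_inv, RCLike.norm_natCast]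
  exact mul_le_mul_of_nonneg_left htail (by positivity)

theorem tendsto_cesaro_of_tendsto_cesaro_mul (hf : ∀ n, ‖f n‖ ≤ C) (hk : 0 < k)
    (h : Tendsto (fun m : ℕ => (m : 𝕜)⁻¹ * ∑ n ∈ Finset.range (k * m), f n) atTop (nhds 0)) :
    Tendsto (fun N : ℕ => (N : 𝕜)⁻¹ * ∑ n ∈ Finset.range N, f n) atTop (nhds 0) := by
  refine squeeze_zero_norm (norm_cesaro_le_norm_cesaro_mul_add hf hk) ?_
  simpa using ((h.comp (Nat.tendsto_div_const_atTop hk.ne')).norm).add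
    (tendsto_const_div_atTop_nhds_zero_nat (C * k))

theorem tendsto_cesaro_of_tendsto_cesaro_residues (hf : ∀ n, ‖f n‖ ≤ C) (hk : 0 < k)
    (h : ∀ j < k, Tendsto (fun m : ℕ => (m : 𝕜)⁻¹ * ∑ i ∈ Finset.range m, f (k * i + j))
      atTop (nhds 0)) :
    Tendsto (fun N : ℕ => (N : 𝕜)⁻¹ * ∑ n ∈ Finset.range N, f n) atTop (nhds 0) := by
  refine tendsto_cesaro_of_tendsto_cesaro_mul hf hk ?_
  simpa only [Finset.sum_range_mul_eq_sum_residues, Finset.mul_sum, Finset.sum_const_zero]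
    using tendsto_finsetSum (Finset.range k) fun j hj => h j (Finset.mem_range.mp hj)

end Cesaro

/-- If the two-point correlation averages of `g` along `T^k` vanish (uniformly in the
initial points, for all sufficiently large distinct primes `r, s`), then the
correlation averages of `g` along `T` itself also vanish for each point and all
sufficiently large distinct primes. -/
theorem stmt16 {X : Type*} [MetricSpace X] [CompactSpace X]
    (T : X ≃ₜ X) (g : C(X, ℂ)) (k : ℕ) (hk : 1 ≤ k)
    (hyp : ∃ R₀ : ℕ, ∀ r s : ℕ, Nat.Prime r → Nat.Prime s → r ≠ s →
      R₀ ≤ r → R₀ ≤ s → ∀ x y : X,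
      Tendsto (fun N : ℕ => (N : ℂ)⁻¹ * ∑ n ∈ Finset.range N,
          g ((⇑T)^[k * (r * n)] x) * (starRingEnd ℂ) (g ((⇑T)^[k * (s * n)] y)))
        atTop (nhds 0)) :
    ∃ R₁ : ℕ, ∀ r s : ℕ, Nat.Prime r → Nat.Prime s → r ≠ s →
      R₁ ≤ r → R₁ ≤ s → ∀ x : X,
      Tendsto (fun N : ℕ => (N : ℂ)⁻¹ * ∑ n ∈ Finset.range N,
          g ((⇑T)^[r * n] x) * (starRingEnd ℂ) (g ((⇑T)^[s * n] x)))
        atTop (nhds 0) := by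
  obtain ⟨R₀, hR₀⟩ := hyp
  refine ⟨R₀, fun r s hr hs hrs hr₀ hs₀ x => ?_⟩
  have hbound : ∀ n, ‖g ((⇑T)^[r * n] x) * (starRingEnd ℂ) (g ((⇑T)^[s * n] x))‖ ≤ ‖g‖ * ‖g‖ :=
    fun n => by
      rw [norm_mul, RCLike.norm_conj]
      exact mul_le_mul (g.norm_coe_le_norm _) (g.norm_coe_le_norm _) (norm_nonneg _)
        (norm_nonneg _)
  refine tendsto_cesaro_of_tendsto_cesaro_residues hbound hk fun j _ => ?_
  have hshift : ∀ (t m : ℕ), (⇑T)^[t * (k * m + j)] x = (⇑T)^[k * (t * m)] ((⇑T)^[t * j] x) :=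
    fun t m => by rw [← Function.iterate_add_apply]; congr 1; ring
  simpa only [hshift] using hR₀ r s hr hs hrs hr₀ hs₀ ((⇑T)^[r * j] x) ((⇑T)^[s * j] x)
end

section
/- Let χ be a non-trivial character of 𝕋⁴, χ(x,y,u,v) = e^{2πi(ax+by+cu+dv)} with (a,b,c,d) ≠ (0,0,0,0). Then for all sufficiently large coprime integers r, s (threshold depending only on χ), and every c₁ ∈ [0,1/r), the restriction of χ to the coset I_{c₁} = {(x, y+c₁, u, v) : s·x = r·y, u,v ∈ 𝕋} is not constant. -/
/-!
Parametrise the coset by `(t, u, v) ↦ (r t, s t + c₁, u, v)`. Along it the character equals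
`e(b c₁) · e((a r + b s) t + c u + d v)`, where `e(x) = exp (2πix)`. Once `r > |b|`, coprimality
of `r` and `s` forces `a r + b s ≠ 0` unless `a = b = 0`, so the frequency vector
`(a r + b s, c, d)` is nonzero and a suitable `(t, u, v)` multiplies the value at `(0, c₁, 0, 0)`
by `e(1/2) = -1`.
-/

open Complex
open scoped Real

lemma fourier_coe_eq_exp (m : ℤ) (x : ℝ) :
    fourier m (x : UnitAddCircle) = exp (2 * π * I * ((m * x : ℝ) : ℂ)) := by
  rw [fourier_coe_apply]
  congr 1
  push_cast
  ring

lemma exp_two_pi_mul_I_add_half (x : ℝ) :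
    exp (2 * π * I * ((x + 1 / 2 : ℝ) : ℂ)) = -exp (2 * π * I * (x : ℂ)) := by
  rw [show 2 * π * I * ((x + 1 / 2 : ℝ) : ℂ) = 2 * π * I * x + π * I by push_cast; ring,
    exp_add, exp_pi_mul_I, mul_neg_one]

lemma Nat.Coprime.eq_zero_of_int_mul_add_mul_eq_zero {r s : ℕ} (hrs : r.Coprime s) {a b : ℤ}
    (hb : b.natAbs < r) (h : a * r + b * s = 0) : a = 0 ∧ b = 0 := by
  have hdvd : (r : ℤ) ∣ b * s := ⟨-a, by linarith⟩
  obtain rfl : b = 0 := Int.eq_zero_of_dvd_of_natAbs_lt_natAbs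
    ((Nat.isCoprime_iff_coprime.mpr hrs).dvd_of_dvd_mul_right hdvd) (by simpa using hb)
  have hr : r ≠ 0 := by omega
  exact ⟨by simpa [hr] using h, rfl⟩

lemma exists_mul_add_mul_add_mul_eq_half {n c d : ℤ} (h : ¬(n = 0 ∧ c = 0 ∧ d = 0)) :
    ∃ t u v : ℝ, n * t + c * u + d * v = 1 / 2 := by
  by_cases hn : n = 0
  · by_cases hc : c = 0
    · have hd : d ≠ 0 := fun hd => h ⟨hn, hc, hd⟩
      exact ⟨0, 0, 1 / (2 * d), by field_simp; simp⟩
    · exact ⟨0, 1 / (2 * c), 0, by field_simp; simp⟩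
  · exact ⟨1 / (2 * n), 0, 0, by field_simp; simp⟩

abbrev Torus4 := UnitAddCircle × UnitAddCircle × UnitAddCircle × UnitAddCircle

noncomputable def fourierChar4 (a b c d : ℤ) (p : Torus4) : ℂ :=
  fourier a p.1 * fourier b p.2.1 * fourier c p.2.2.1 * fourier d p.2.2.2

noncomputable def cosetPoint (r s : ℕ) (c₁ t u v : ℝ) : Torus4 :=
  (((r * t : ℝ) : UnitAddCircle), ((s * t + c₁ : ℝ) : UnitAddCircle), (u : UnitAddCircle),
    (v : UnitAddCircle))

lemma cosetPoint_mem (r s : ℕ) (c₁ t u v : ℝ) :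
    s • (cosetPoint r s c₁ t u v).1 =
      r • ((cosetPoint r s c₁ t u v).2.1 - ((c₁ : ℝ) : UnitAddCircle)) := by
  simp only [cosetPoint, ← AddCircle.coe_sub, ← AddCircle.coe_nsmul, nsmul_eq_mul]
  ring_nf

lemma fourierChar4_cosetPoint (a b c d : ℤ) (r s : ℕ) (c₁ t u v : ℝ) :
    fourierChar4 a b c d (cosetPoint r s c₁ t u v) =
      exp (2 * π * I * ((b * c₁ + ((a * r + b * s : ℤ) * t + c * u + d * v) : ℝ) : ℂ)) := by
  simp only [fourierChar4, cosetPoint, fourier_coe_eq_exp, ← exp_add]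
  congr 1
  push_cast
  ring

/-- A non-trivial character `χ(x,y,u,v) = e^{2πi(ax+by+cu+dv)}` of `𝕋⁴` is non-constant
on each coset `I_{c₁} = {(x, y+c₁, u, v) : s x = r y}`, for all sufficiently large
coprime `r, s` (with the threshold depending only on `χ`). -/
theorem stmt18 (a b c d : ℤ) (hne : ¬(a = 0 ∧ b = 0 ∧ c = 0 ∧ d = 0)) :
    ∃ R : ℕ, ∀ r s : ℕ, R ≤ r → R ≤ s → Nat.Coprime r s →
      ∀ c₁ : ℝ, c₁ ∈ Set.Ico (0 : ℝ) (1 / (r : ℝ)) →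
      ∃ p q : UnitAddCircle × UnitAddCircle × UnitAddCircle × UnitAddCircle,
        s • p.1 = r • (p.2.1 - ((c₁ : ℝ) : UnitAddCircle)) ∧
        s • q.1 = r • (q.2.1 - ((c₁ : ℝ) : UnitAddCircle)) ∧
        fourier a p.1 * fourier b p.2.1 * fourier c p.2.2.1 * fourier d p.2.2.2 ≠
          fourier a q.1 * fourier b q.2.1 * fourier c q.2.2.1 * fourier d q.2.2.2 := by
  refine ⟨b.natAbs + 1, fun r s hr _ hrs c₁ _ => ?_⟩
  have hfreq : ¬(a * r + b * s = 0 ∧ c = 0 ∧ d = 0) := fun ⟨h, hc, hd⟩ =>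
    have hab := hrs.eq_zero_of_int_mul_add_mul_eq_zero (by omega) h
    hne ⟨hab.1, hab.2, hc, hd⟩
  obtain ⟨t, u, v, hhalf⟩ := exists_mul_add_mul_add_mul_eq_half hfreq
  refine ⟨cosetPoint r s c₁ t u v, cosetPoint r s c₁ 0 0 0, cosetPoint_mem .., cosetPoint_mem ..,
    ?_⟩
  change fourierChar4 a b c d _ ≠ fourierChar4 a b c d _
  rw [fourierChar4_cosetPoint, fourierChar4_cosetPoint, hhalf, exp_two_pi_mul_I_add_half]
  simpa using neg_ne_self.mpr (exp_ne_zero _)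
end
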